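/- Let s ≥ 1 be an integer. For all positive integers k and n, Σ_{d | k} c_d^{(s)}(n) equals k^s if k^s | n and equals 0 otherwise. (That is, writing ξ_k^{(s)}(n) = k^s if k^s | n and 0 otherwise, one has ξ_k^{(s)}(n) = Σ_{d | k} c_d^{(s)}(n).) -/

import Mathlib

open scoped BigOperators
open ArithmeticFunction

/-- Generalized gcd `(a,b)_s`: the largest `d ^ s` (with `d` a positive integer)
dividing both `a` and `b`. -/
def ggcd (s a b : ℕ) : ℕ :=
  (Nat.findGreatest (fun d => d ^ s ∣ a ∧ d ^ s ∣ b) (max a b)) ^ s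

/-- The Cohen–Ramanujan sum `c_k^{(s)}(n) = Σ_{h=1, (h,k^s)_s=1}^{k^s} e^{2πinh/k^s}`. -/
noncomputable def CRS (s k n : ℕ) : ℂ :=
  ∑ h ∈ Finset.Icc 1 (k ^ s),
    if ggcd s h (k ^ s) = 1 then
      Complex.exp (2 * Real.pi * Complex.I * n * h / (k ^ s))
    else 0

/-- The core of `k`: its largest squarefree divisor. -/
def core (k : ℕ) : ℕ := ∏ p ∈ k.primeFactors, p

/-- `k* = k / k̄`. -/
def spart (k : ℕ) : ℕ := k / core k

/-- `ξ_d(k) = d` if `d ∣ k`, and `0` otherwise. -/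
def xi (d k : ℕ) : ℕ := if d ∣ k then d else 0

/-- Klee's function `Φ_s(n) = n ∏_{p prime, p^s ∣ n} (1 - 1/p^s)`. -/
noncomputable def Klee (s n : ℕ) : ℂ :=
  n * ∏ p ∈ n.primeFactors.filter (fun p => p ^ s ∣ n), (1 - 1 / (p : ℂ) ^ s)

/-- The Jordan totient function `J_s(n) = n^s ∏_{p ∣ n} (1 - 1/p^s)` (as a complex number). -/
noncomputable def Jordan (s n : ℕ) : ℂ :=
  (n : ℂ) ^ s * ∏ p ∈ n.primeFactors, (1 - 1 / (p : ℂ) ^ s)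

/-!
Every `h ∈ [1, k ^ s]` has `(h, k ^ s)_s = c ^ s` for a unique `c ∣ k`, and then `h = c ^ s j` with
`j ∈ [1, (k / c) ^ s]` and `(j, (k / c) ^ s)_s = 1`. Grouping the sum of `e^{2πinh/k^s}` over
`h ∈ [1, k ^ s]` by `d = k / c` therefore gives `Σ_{d ∣ k} c_d^{(s)}(n)`, while the full sum of
these `k ^ s`-th roots of unity is `k ^ s` or `0` according as `k ^ s ∣ n`.
-/

open Finset

def ggcdRoot (s a b : ℕ) : ℕ :=
  Nat.findGreatest (fun d => d ^ s ∣ a ∧ d ^ s ∣ b) (max a b)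

section ggcd

variable {s a b d : ℕ}

theorem ggcd_eq_ggcdRoot_pow : ggcd s a b = ggcdRoot s a b ^ s := rfl

theorem pow_ggcdRoot_dvd (ha : 0 < a) : ggcdRoot s a b ^ s ∣ a ∧ ggcdRoot s a b ^ s ∣ b :=
  Nat.findGreatest_spec (P := fun d => d ^ s ∣ a ∧ d ^ s ∣ b) (le_max_of_le_left ha) (by simp)

theorem le_ggcdRoot (hs : s ≠ 0) (ha : 0 < a) (hda : d ^ s ∣ a) (hdb : d ^ s ∣ b) :
    d ≤ ggcdRoot s a b :=
  Nat.le_findGreatest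
    (le_max_of_le_left ((Nat.le_self_pow hs d).trans (Nat.le_of_dvd ha hda))) ⟨hda, hdb⟩

theorem ggcdRoot_pos (hs : s ≠ 0) (ha : 0 < a) : 0 < ggcdRoot s a b := by
  refine Nat.pos_of_ne_zero fun h => ?_
  have := (pow_ggcdRoot_dvd (s := s) (b := b) ha).1
  simp [h, zero_pow hs, ha.ne'] at this

theorem ggcd_eq_one_iff (hs : s ≠ 0) (ha : 0 < a) :
    ggcd s a b = 1 ↔ ∀ d, d ^ s ∣ a → d ^ s ∣ b → d = 1 := by
  rw [ggcd_eq_ggcdRoot_pow, pow_eq_one_iff_left hs]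
  refine ⟨fun h d hda hdb => ?_, fun h => h _ (pow_ggcdRoot_dvd ha).1 (pow_ggcdRoot_dvd ha).2⟩
  have hd : d ≠ 0 := by
    rintro rfl
    simp [zero_pow hs, ha.ne'] at hda
  have := le_ggcdRoot hs ha hda hdb
  omega

theorem ggcd_div_ggcd_div_ggcd_eq_one (hs : s ≠ 0) (ha : 0 < a) :
    ggcd s (a / ggcd s a b) (b / ggcd s a b) = 1 := by
  obtain ⟨hca, hcb⟩ := pow_ggcdRoot_dvd (b := b) ha
  have hc := ggcdRoot_pos (b := b) hs ha
  rw [ggcd_eq_ggcdRoot_pow (a := a) (b := b)]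
  have ha' : 0 < a / ggcdRoot s a b ^ s := Nat.div_pos (Nat.le_of_dvd ha hca) (pow_pos hc s)
  rw [ggcd_eq_one_iff hs ha']
  intro e hea heb
  have hce : ggcdRoot s a b * e ≤ ggcdRoot s a b := by
    refine le_ggcdRoot hs ha ?_ ?_ <;> rw [mul_pow]
    · exact (Nat.mul_dvd_mul_left _ hea).trans (Nat.mul_div_cancel' hca).dvd
    · exact (Nat.mul_dvd_mul_left _ heb).trans (Nat.mul_div_cancel' hcb).dvd
  have he : e ≠ 0 := by
    rintro rfl
    simp [zero_pow hs, ha'.ne'] at hea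
  nlinarith [Nat.one_le_iff_ne_zero.mpr he]

end ggcd

/-- Writing `c = g c'` and `m = g m'` with `g = gcd c m`, the hypotheses force `c' ^ s ∣ j` and
`c' ∣ d`, so `c' = 1`. -/
theorem dvd_of_dvd_mul_of_pow_dvd_pow_mul {s c d m j : ℕ} (hm : 0 < m) (hc : c ∣ d * m)
    (hcs : c ^ s ∣ m ^ s * j) (hcop : ∀ e, e ^ s ∣ j → e ^ s ∣ d ^ s → e = 1) : c ∣ m := by
  obtain ⟨g, c', m', hg, hcm', rfl, rfl⟩ := Nat.exists_coprime' (Nat.gcd_pos_of_pos_right c hm)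
  have hc'j : c' ^ s ∣ j := by
    rw [mul_pow, mul_pow, mul_right_comm] at hcs
    exact (Nat.Coprime.pow s s hcm').dvd_of_dvd_mul_left
      (Nat.dvd_of_mul_dvd_mul_right (pow_pos hg s) hcs)
  have hc'd : c' ∣ d := by
    rw [← mul_assoc] at hc
    exact hcm'.dvd_of_dvd_mul_right (Nat.dvd_of_mul_dvd_mul_right hg hc)
  rw [hcop c' hc'j (pow_dvd_pow_of_dvd hc'd s), one_mul]
  exact dvd_mul_left g m'

theorem ggcdRoot_pow_mul_of_ggcd_eq_one {s d m j : ℕ} (hs : s ≠ 0) (hm : 0 < m) (hj : 0 < j)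
    (hcop : ggcd s j (d ^ s) = 1) : ggcdRoot s (m ^ s * j) ((d * m) ^ s) = m := by
  have hmj : 0 < m ^ s * j := Nat.mul_pos (pow_pos hm s) hj
  obtain ⟨hcj, hcdm⟩ := pow_ggcdRoot_dvd (s := s) (b := (d * m) ^ s) hmj
  refine le_antisymm (Nat.le_of_dvd hm ?_) (le_ggcdRoot hs hmj (dvd_mul_right _ _) ?_)
  · exact dvd_of_dvd_mul_of_pow_dvd_pow_mul hm ((Nat.pow_dvd_pow_iff hs).mp hcdm) hcj
      ((ggcd_eq_one_iff hs hj).mp hcop)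
  · exact pow_dvd_pow_of_dvd (dvd_mul_left m d) s

def sReducedResidues (s d : ℕ) : Finset ℕ :=
  (Icc 1 (d ^ s)).filter fun j => ggcd s j (d ^ s) = 1

section bijection

variable {s k : ℕ}

theorem pow_div_mul_mem_Icc {d j : ℕ} (hk : 0 < k) (hdk : d ∣ k)
    (hj : j ∈ sReducedResidues s d) :
    (k / d) ^ s * j ∈ Icc 1 (k ^ s) := by
  obtain ⟨⟨hj1, hjd⟩, -⟩ := by simpa only [sReducedResidues, mem_filter, mem_Icc] using hj
  have hkd : 0 < k / d := Nat.div_pos (Nat.le_of_dvd hk hdk) (Nat.pos_of_dvd_of_pos hdk hk)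
  refine mem_Icc.mpr ⟨Nat.mul_pos (pow_pos hkd s) hj1, ?_⟩
  calc (k / d) ^ s * j ≤ (k / d) ^ s * d ^ s := Nat.mul_le_mul_left _ hjd
    _ = k ^ s := by rw [← mul_pow, Nat.div_mul_cancel hdk]

theorem div_ggcd_mem_sReducedResidues (hs : s ≠ 0) {h : ℕ} (hh : h ∈ Icc 1 (k ^ s)) :
    h / ggcd s h (k ^ s) ∈ sReducedResidues s (k / ggcdRoot s h (k ^ s)) := by
  obtain ⟨hh1, hhk⟩ := mem_Icc.mp hh
  obtain ⟨hch, hck⟩ := pow_ggcdRoot_dvd (b := k ^ s) hh1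
  have hc := ggcdRoot_pos (b := k ^ s) hs hh1
  rw [← ggcd_eq_ggcdRoot_pow] at hch hck
  have hdiv : (k / ggcdRoot s h (k ^ s)) ^ s = k ^ s / ggcd s h (k ^ s) :=
    Nat.div_pow ((Nat.pow_dvd_pow_iff hs).mp hck)
  simp only [sReducedResidues, mem_filter, mem_Icc, hdiv]
  refine ⟨⟨Nat.div_pos (Nat.le_of_dvd hh1 hch) (pow_pos hc s), Nat.div_le_div_right hhk⟩, ?_⟩
  exact ggcd_div_ggcd_div_ggcd_eq_one hs hh1

theorem ggcdRoot_pow_div_mul (hs : s ≠ 0) (hk : 0 < k) {d j : ℕ} (hdk : d ∣ k)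
    (hj : j ∈ sReducedResidues s d) : ggcdRoot s ((k / d) ^ s * j) (k ^ s) = k / d := by
  obtain ⟨⟨hj1, -⟩, hcop⟩ := by simpa only [sReducedResidues, mem_filter, mem_Icc] using hj
  have hkd : 0 < k / d := Nat.div_pos (Nat.le_of_dvd hk hdk) (Nat.pos_of_dvd_of_pos hdk hk)
  have := ggcdRoot_pow_mul_of_ggcd_eq_one hs hkd hj1 hcop
  rwa [Nat.mul_div_cancel' hdk] at this

/-- Grouping `h ∈ [1, k ^ s]` by `(h, k ^ s)_s = c ^ s` and writing `h = c ^ s j`, `d = k / c`. -/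
theorem sum_divisors_sum_sReducedResidues {M : Type*} [AddCommMonoid M] (hs : s ≠ 0) (hk : 0 < k)
    (f : ℕ → M) :
    ∑ d ∈ k.divisors, ∑ j ∈ sReducedResidues s d, f ((k / d) ^ s * j) =
      ∑ h ∈ Icc 1 (k ^ s), f h := by
  rw [sum_sigma']
  refine sum_nbij' (fun p => (k / p.1) ^ s * p.2)
    (fun h => ⟨k / ggcdRoot s h (k ^ s), h / ggcd s h (k ^ s)⟩) ?_ ?_ ?_ ?_ (fun _ _ => rfl)
  · rintro ⟨d, j⟩ hp
    rw [mem_sigma, Nat.mem_divisors] at hp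
    exact pow_div_mul_mem_Icc hk hp.1.1 hp.2
  · intro h hh
    refine mem_sigma.mpr ⟨Nat.mem_divisors.mpr ⟨Nat.div_dvd_of_dvd ?_, hk.ne'⟩,
      div_ggcd_mem_sReducedResidues hs hh⟩
    exact (Nat.pow_dvd_pow_iff hs).mp (pow_ggcdRoot_dvd (mem_Icc.mp hh).1).2
  · rintro ⟨d, j⟩ hp
    rw [mem_sigma, Nat.mem_divisors] at hp
    have hkd : 0 < k / d := Nat.div_pos (Nat.le_of_dvd hk hp.1.1) (Nat.pos_of_dvd_of_pos hp.1.1 hk)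
    simp only [ggcd_eq_ggcdRoot_pow, ggcdRoot_pow_div_mul hs hk hp.1.1 hp.2,
      Nat.div_div_self hp.1.1 hk.ne', Nat.mul_div_cancel_left _ (pow_pos hkd s)]
  · intro h hh
    obtain ⟨hch, hck⟩ := pow_ggcdRoot_dvd (s := s) (b := k ^ s) (mem_Icc.mp hh).1
    simp only [ggcd_eq_ggcdRoot_pow, Nat.div_div_self ((Nat.pow_dvd_pow_iff hs).mp hck) hk.ne',
      Nat.mul_div_cancel' hch]

end bijection

theorem sum_Icc_pow_of_pow_eq_one {R : Type*} [CommRing R] [IsDomain R] [DecidableEq R]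
    {ζ : R} {M : ℕ} (hζ : ζ ^ M = 1) : ∑ h ∈ Icc 1 M, ζ ^ h = if ζ = 1 then (M : R) else 0 := by
  split_ifs with h1
  · simp [h1]
  have hgeom : (∑ i ∈ range M, ζ ^ i) * (ζ - 1) = 0 := by rw [geom_sum_mul, hζ, sub_self]
  rw [← Ico_add_one_right_eq_Icc, sum_Ico_eq_sum_range, Nat.add_sub_cancel]
  simp only [pow_add, pow_one, ← mul_sum]
  rw [(mul_eq_zero.mp hgeom).resolve_right (sub_ne_zero.mpr h1), mul_zero]

open Complex Real in
theorem sum_Icc_exp_two_pi_mul_I {M : ℕ} (hM : M ≠ 0) (n : ℕ) :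
    ∑ h ∈ Icc 1 M, exp (2 * π * I * n * h / M) = if M ∣ n then (M : ℂ) else 0 := by
  have hprim := isPrimitiveRoot_exp M hM
  have hexp (h : ℕ) : exp (2 * π * I * n * h / M) = (exp (2 * π * I / M) ^ n) ^ h := by
    rw [← pow_mul, ← Complex.exp_nat_mul]
    push_cast
    ring_nf
  have hpow : (exp (2 * π * I / M) ^ n) ^ M = 1 := by
    rw [← pow_mul, mul_comm n M, pow_mul, hprim.pow_eq_one, one_pow]
  simp only [hexp, sum_Icc_pow_of_pow_eq_one hpow, hprim.pow_eq_one_iff_dvd]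

open Complex Real in
theorem CRS_eq_sum_sReducedResidues {s k d : ℕ} (n : ℕ) (hk : 0 < k) (hdk : d ∣ k) :
    CRS s d n =
      ∑ j ∈ sReducedResidues s d, exp (2 * π * I * n * ((k / d) ^ s * j : ℕ) / (k : ℂ) ^ s) := by
  have hd : (d : ℂ) ≠ 0 := Nat.cast_ne_zero.mpr (Nat.pos_of_dvd_of_pos hdk hk).ne'
  have hkd : ((k / d : ℕ) : ℂ) ≠ 0 :=
    Nat.cast_ne_zero.mpr (Nat.div_pos (Nat.le_of_dvd hk hdk) (Nat.pos_of_dvd_of_pos hdk hk)).ne'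
  have hk' : (k : ℂ) = (k / d : ℕ) * d := by rw [← Nat.cast_mul, Nat.div_mul_cancel hdk]
  rw [CRS, sReducedResidues, sum_filter]
  refine sum_congr rfl fun j _ => ?_
  congr 2
  rw [hk']
  push_cast
  field_simp
  ring

theorem sum_divisors_CRS_general (s : ℕ) (hs : 1 ≤ s) (k n : ℕ) (hk : 0 < k) :
    ∑ d ∈ k.divisors, CRS s d n = if k ^ s ∣ n then ((k : ℂ)) ^ s else 0 := by
  have hM : k ^ s ≠ 0 := pow_ne_zero s hk.ne'
  calc ∑ d ∈ k.divisors, CRS s d n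
      = ∑ d ∈ k.divisors, ∑ j ∈ sReducedResidues s d,
          Complex.exp (2 * Real.pi * Complex.I * n * ((k / d) ^ s * j : ℕ) / ((k ^ s : ℕ) : ℂ)) :=
        sum_congr rfl fun d hd => by
          rw [CRS_eq_sum_sReducedResidues n hk (Nat.dvd_of_mem_divisors hd), Nat.cast_pow]
    _ = ∑ h ∈ Icc 1 (k ^ s),
          Complex.exp (2 * Real.pi * Complex.I * n * h / ((k ^ s : ℕ) : ℂ)) :=
        sum_divisors_sum_sReducedResidues (by omega) hk
          (fun h => Complex.exp (2 * Real.pi * Complex.I * n * h / ((k ^ s : ℕ) : ℂ)))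
    _ = if k ^ s ∣ n then ((k : ℂ)) ^ s else 0 := by
      rw [sum_Icc_exp_two_pi_mul_I hM, Nat.cast_pow]

/-- `ξ_k^{(s)}(n) = Σ_{d ∣ k} c_d^{(s)}(n)`, where `ξ_k^{(s)}(n) = k^s` if `k^s ∣ n`
and `0` otherwise. -/
theorem sum_divisors_CRS (s : ℕ) (hs : 1 ≤ s) (k n : ℕ) (hk : 0 < k) (hn : 0 < n) :
    ∑ d ∈ k.divisors, CRS s d n = if k ^ s ∣ n then ((k : ℂ)) ^ s else 0 :=
  sum_divisors_CRS_general s hs k n hk
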